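/- Almost surely, f(X_{Δ,T}) = E[f(X_{Δ,T})] + Σ_{j=1}^{J} Σ_{(U_1,U_2)∈𝒜} Σ_{o∈{1,2}^{U_1}} a_{j,o,U_1,U_2}(X_{Δ,(j−1)Δ}) ∏_{r∈U_1} H_{o_r}(ξ_j^r) ∏_{(k,l)∈U_2} V_j^{kl}; moreover E[f(X_{Δ,T})] = q_0(x_0). -/

import Mathlib

/-!
Code one step of the noise by `c ∈ {−√3, 0, √3}^m × {±1}^{I₂}`. Under the law of `c`, the
products of `1, H₁, H₂` in the `ξ`-coordinates and of the `z^{kl}` form an orthonormal basis of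
all functions of `c`: `1, H₁, H₂` are orthonormal for the three-point law of `ξ^i`, and `1, z` for
a fair coin. Expanding `q_j(Φ_Δ(x, ·))` in this basis gives `q_{j−1}(x)` as its constant term and
the `a_{j,o,U₁,U₂}(x)` as its other coefficients, so `f(X_{Δ,T}) − q_0(x_0)` telescopes into the
stated sum. Since the codes of the successive steps are independent with product law, `q_0(x_0)`,
which is the sum over all noise paths weighted by their probabilities, is `E[f(X_{Δ,T})]`.
-/

open MeasureTheory ProbabilityTheory Finset

noncomputable section

/-- Map a boolean to `±1`. -/
def pm (b : Bool) : ℝ := if b then 1 else -1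

/-- The index set `I_2 = {(k,l) : 1 ≤ k < l ≤ m}`. -/
abbrev Upper (m : ℕ) := {p : Fin m × Fin m // p.1 < p.2}

/-- Law of a fair `±1` coin. -/
def coinLaw : Measure ℝ :=
  (1 / 2 : ENNReal) • Measure.dirac (1 : ℝ) + (1 / 2 : ENNReal) • Measure.dirac (-1 : ℝ)

/-- Law with `P(±√3) = 1/6`, `P(0) = 2/3`. -/
def xiLaw : Measure ℝ :=
  (1 / 6 : ENNReal) • Measure.dirac (Real.sqrt 3)
    + (1 / 6 : ENNReal) • Measure.dirac (-Real.sqrt 3)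
    + (2 / 3 : ENNReal) • Measure.dirac (0 : ℝ)

/-- The three values `−√3, 0, √3`. -/
def val3 : Fin 3 → ℝ := ![-Real.sqrt 3, 0, Real.sqrt 3]

/-- The normalized Hermite polynomial `H_2(x) = (x² − 1)/√2` (`H_1(x) = x`). -/
def H2 (t : ℝ) : ℝ := (t ^ 2 - 1) / Real.sqrt 2

/-- The antisymmetric matrix `z` built from upper-triangular `±1` entries, with
`z^{vu} = −z^{uv}` and `z^{uu} = −1`. -/
def zmat {m : ℕ} (b : Upper m → Bool) : Fin m → Fin m → ℝ := fun i l =>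
  if h : i < l then pm (b ⟨(i, l), h⟩)
  else if h' : l < i then -pm (b ⟨(l, i), h'⟩)
  else -1

/-- Backward recursion: `qB Φ f k = q_{J-k}`, i.e. `qB Φ f 0 = q_J = f` and
`q_{j-1}(x) = 2^{-m(m-1)/2} 6^{-m} Σ_y Σ_z 4^{#{i : yᵢ = 0}} q_j(Φ x y z)`. -/
def qB {d m : ℕ}
    (Φ : (Fin d → ℝ) → (Fin m → ℝ) → (Fin m → Fin m → ℝ) → Fin d → ℝ)
    (f : (Fin d → ℝ) → ℝ) : ℕ → (Fin d → ℝ) → ℝ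
  | 0 => f
  | k + 1 => fun x =>
      ((2 : ℝ) ^ (m * (m - 1) / 2))⁻¹ * ((6 : ℝ) ^ m)⁻¹ *
        ∑ y : Fin m → Fin 3, ∑ b : Upper m → Bool,
          (4 : ℝ) ^ ((Finset.univ.filter fun i => y i = 1).card) *
            qB Φ f k (Φ x (fun i => val3 (y i)) (zmat b))

/-- Coefficient `a_{j,o,U_1,U_2}` with `k = J - j`, where `o ∈ {1,2}^{U_1}` is encoded
by the subset `K_2 = {r ∈ U_1 : o_r = 2} ⊆ U_1` (so `𝒦_1 = U_1 \ K_2`):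
`a(x) = 2^{-m(m-1)/2} 6^{-m} Σ_y Σ_z 4^{#{i : yᵢ = 0}} (Π_{r∈U_1} H_{o_r}(y^r))
(Π_{(k,l)∈U_2} z^{kl}) q_j(Φ x y z)`. -/
def aB {d m : ℕ}
    (Φ : (Fin d → ℝ) → (Fin m → ℝ) → (Fin m → Fin m → ℝ) → Fin d → ℝ)
    (f : (Fin d → ℝ) → ℝ) (k : ℕ)
    (U1 K2 : Finset (Fin m)) (U2 : Finset (Upper m)) (x : Fin d → ℝ) : ℝ :=
  ((2 : ℝ) ^ (m * (m - 1) / 2))⁻¹ * ((6 : ℝ) ^ m)⁻¹ *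
    ∑ y : Fin m → Fin 3, ∑ b : Upper m → Bool,
      (4 : ℝ) ^ ((Finset.univ.filter fun i => y i = 1).card) *
        ((∏ r ∈ U1 \ K2, val3 (y r)) * (∏ r ∈ K2, H2 (val3 (y r))) *
          (∏ p ∈ U2, pm (b p)) * qB Φ f k (Φ x (fun i => val3 (y i)) (zmat b)))

/-- The second order discretisation scheme `X_{Δ,0} = x_0`,
`X_{Δ,jΔ} = Φ_Δ(X_{Δ,(j-1)Δ}, ξ_j, V_j)`. -/
def XB {d m : ℕ} {Ω : Type*}
    (Φ : (Fin d → ℝ) → (Fin m → ℝ) → (Fin m → Fin m → ℝ) → Fin d → ℝ)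
    (x0 : Fin d → ℝ) (ξ : ℕ → Ω → Fin m → ℝ)
    (V : ℕ → Ω → Fin m → Fin m → ℝ) : ℕ → Ω → Fin d → ℝ
  | 0 => fun _ => x0
  | j + 1 => fun ω => Φ (XB Φ x0 ξ V j ω) (ξ (j + 1) ω) (V (j + 1) ω)

/-- All scalar noise coordinates `ξ_j^i` and `V_j^{il}` (`i < l`) as one family. -/
def noiseB {m : ℕ} {Ω : Type*} (ξ : ℕ → Ω → Fin m → ℝ)
    (V : ℕ → Ω → Fin m → Fin m → ℝ) : ℕ × (Fin m ⊕ Upper m) → Ω → ℝ :=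
  fun p ω =>
    match p.2 with
    | Sum.inl i => ξ p.1 ω i
    | Sum.inr u => V p.1 ω u.1.1 u.1.2


section

lemma sum_powerset_sdiff_prod_mul_prod {ι R : Type*} [Fintype ι] [DecidableEq ι] [CommRing R]
    (A B : ι → R) :
    ∑ U : Finset ι, ∑ K ∈ U.powerset, (∏ r ∈ U \ K, A r) * ∏ r ∈ K, B r
      = ∏ r, (1 + A r + B r) := by
  simp_rw [add_assoc, prod_one_add, powerset_univ, add_comm (A _), prod_add, mul_comm]

lemma card_upper (m : ℕ) : Fintype.card (Upper m) = m * (m - 1) / 2 := by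
  simpa [Fintype.card_subtype, ← Nat.choose_two_right] using
    card_product_filter_lt (s := (univ : Finset (Fin m)))

abbrev NoiseCode (m : ℕ) := (Fin m → Fin 3) × (Upper m → Bool)

variable {m : ℕ}

def decode (c : NoiseCode m) : (Fin m → ℝ) × (Fin m → Fin m → ℝ) :=
  (fun i => val3 (c.1 i), zmat c.2)

def xiWeight : Fin 3 → ℝ := ![1/6, 2/3, 1/6]

def codeWeight (c : NoiseCode m) : ℝ :=
  (∏ r, xiWeight (c.1 r)) * ∏ _p : Upper m, (1/2 : ℝ)

def chaosBasis (U1 K2 : Finset (Fin m)) (U2 : Finset (Upper m)) (c : NoiseCode m) : ℝ :=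
  (∏ r ∈ U1 \ K2, val3 (c.1 r)) * (∏ r ∈ K2, H2 (val3 (c.1 r))) * ∏ p ∈ U2, pm (c.2 p)

lemma codeWeight_eq (c : NoiseCode m) :
    codeWeight c = ((2 : ℝ) ^ (m * (m - 1) / 2))⁻¹ * ((6 : ℝ) ^ m)⁻¹ *
      (4 : ℝ) ^ (univ.filter fun i => c.1 i = 1).card := by
  have hxi (t : Fin 3) : xiWeight t = (6 : ℝ)⁻¹ * if t = 1 then 4 else 1 := by
    fin_cases t <;> norm_num [xiWeight]
  simp only [codeWeight, hxi, prod_mul_distrib, prod_ite, prod_const, card_univ, card_upper,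
    Fintype.card_fin, one_pow, mul_one, inv_pow, one_div]
  ring

/-- `1, H₁, H₂` are orthonormal for the three-point law of `ξ^i`, hence an orthonormal basis, so
their reproducing kernel is the delta function. -/
lemma xiWeight_mul_kernel (s t : Fin 3) :
    xiWeight t * (1 + val3 s * val3 t + H2 (val3 s) * H2 (val3 t)) = if s = t then 1 else 0 := by
  have h3 : Real.sqrt 3 ^ 2 = 3 := Real.sq_sqrt (by norm_num)
  have h2 : Real.sqrt 2 ^ 2 = 2 := Real.sq_sqrt (by norm_num)
  have h2ne : Real.sqrt 2 ≠ 0 := by positivity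
  fin_cases s <;> fin_cases t <;>
    simp [xiWeight, val3, H2, div_mul_div_comm, h3] <;> field_simp <;> norm_num [h2]

lemma half_mul_coin_kernel (s t : Bool) :
    (1/2 : ℝ) * (1 + pm s * pm t) = if s = t then 1 else 0 := by
  cases s <;> cases t <;> norm_num [pm]

lemma sum_chaosBasis_mul_chaosBasis (c0 c : NoiseCode m) :
    ∑ U1 : Finset (Fin m), ∑ U2 : Finset (Upper m), ∑ K2 ∈ U1.powerset,
        chaosBasis U1 K2 U2 c0 * chaosBasis U1 K2 U2 c
      = (∏ r, (1 + val3 (c0.1 r) * val3 (c.1 r) + H2 (val3 (c0.1 r)) * H2 (val3 (c.1 r))))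
        * ∏ p, (1 + pm (c0.2 p) * pm (c.2 p)) := by
  rw [← sum_powerset_sdiff_prod_mul_prod, prod_one_add, powerset_univ, Finset.sum_mul]
  refine Finset.sum_congr rfl fun U1 _ => ?_
  rw [Finset.sum_mul_sum, Finset.sum_comm]
  refine Finset.sum_congr rfl fun K2 _ => Finset.sum_congr rfl fun U2 _ => ?_
  simp only [chaosBasis, prod_mul_distrib]
  ring

lemma codeWeight_mul_sum_chaosBasis_mul_chaosBasis (c0 c : NoiseCode m) :
    codeWeight c * ∑ U1 : Finset (Fin m), ∑ U2 : Finset (Upper m), ∑ K2 ∈ U1.powerset,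
        chaosBasis U1 K2 U2 c0 * chaosBasis U1 K2 U2 c
      = if c0 = c then 1 else 0 := by
  rw [sum_chaosBasis_mul_chaosBasis, codeWeight, mul_mul_mul_comm, ← prod_mul_distrib,
    ← prod_mul_distrib]
  simp only [xiWeight_mul_kernel, half_mul_coin_kernel, Fintype.prod_boole, ← funext_iff,
    ite_zero_mul_ite_zero, mul_one, Prod.ext_iff]

lemma sum_chaosCoeff_mul_chaosBasis (g : NoiseCode m → ℝ) (c0 : NoiseCode m) :
    ∑ U1 : Finset (Fin m), ∑ U2 : Finset (Upper m), ∑ K2 ∈ U1.powerset,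
        (∑ c, codeWeight c * chaosBasis U1 K2 U2 c * g c) * chaosBasis U1 K2 U2 c0
      = g c0 := by
  calc _ = ∑ c : NoiseCode m, (codeWeight c * ∑ U1 : Finset (Fin m), ∑ U2 : Finset (Upper m),
              ∑ K2 ∈ U1.powerset, chaosBasis U1 K2 U2 c0 * chaosBasis U1 K2 U2 c) * g c := by
        simp only [Finset.sum_mul, Finset.mul_sum]
        conv_rhs => rw [Finset.sum_comm]
        refine Finset.sum_congr rfl fun U1 _ => ?_
        conv_rhs => rw [Finset.sum_comm]
        refine Finset.sum_congr rfl fun U2 _ => ?_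
        conv_rhs => rw [Finset.sum_comm]
        refine Finset.sum_congr rfl fun K2 _ => Finset.sum_congr rfl fun c _ => ?_
        ring
    _ = g c0 := by simp [codeWeight_mul_sum_chaosBasis_mul_chaosBasis]

section Coefficients

variable {d : ℕ} (Φ : (Fin d → ℝ) → (Fin m → ℝ) → (Fin m → Fin m → ℝ) → Fin d → ℝ)
  (f : (Fin d → ℝ) → ℝ)

def applyCode (x : Fin d → ℝ) (c : NoiseCode m) : Fin d → ℝ :=
  Φ x (decode c).1 (decode c).2

lemma qB_succ_eq_sum (k : ℕ) (x : Fin d → ℝ) :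
    qB Φ f (k + 1) x = ∑ c, codeWeight c * qB Φ f k (applyCode Φ x c) := by
  simp only [qB, Fintype.sum_prod_type, Finset.mul_sum]
  refine Finset.sum_congr rfl fun y _ => Finset.sum_congr rfl fun b _ => ?_
  rw [codeWeight_eq, applyCode, decode]
  ring

lemma aB_eq_sum (k : ℕ) (U1 K2 : Finset (Fin m)) (U2 : Finset (Upper m)) (x : Fin d → ℝ) :
    aB Φ f k U1 K2 U2 x
      = ∑ c, codeWeight c * chaosBasis U1 K2 U2 c * qB Φ f k (applyCode Φ x c) := by
  simp only [aB, Fintype.sum_prod_type, Finset.mul_sum]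
  refine Finset.sum_congr rfl fun y _ => Finset.sum_congr rfl fun b _ => ?_
  rw [codeWeight_eq, chaosBasis, applyCode, decode]
  ring

lemma qB_applyCode_eq (k : ℕ) (x : Fin d → ℝ) (c0 : NoiseCode m) :
    qB Φ f k (applyCode Φ x c0)
      = qB Φ f (k + 1) x
        + ∑ U1 : Finset (Fin m),
            ∑ U2 ∈ (Finset.univ : Finset (Finset (Upper m))).filter
                (fun U2 => U1.Nonempty ∨ U2.Nonempty),
              ∑ K2 ∈ U1.powerset, aB Φ f k U1 K2 U2 x * chaosBasis U1 K2 U2 c0 := by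
  have hexp := sum_chaosCoeff_mul_chaosBasis (fun c => qB Φ f k (applyCode Φ x c)) c0
  simp only [← aB_eq_sum] at hexp
  have hconst : qB Φ f (k + 1) x = ∑ U1 : Finset (Fin m),
      ∑ U2 ∈ (Finset.univ : Finset (Finset (Upper m))).filter
          (fun U2 => ¬(U1.Nonempty ∨ U2.Nonempty)),
        ∑ K2 ∈ U1.powerset, aB Φ f k U1 K2 U2 x * chaosBasis U1 K2 U2 c0 := by
    simp [Finset.sum_filter, not_nonempty_iff_eq_empty, ite_and, chaosBasis, aB_eq_sum,
      qB_succ_eq_sum]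
  rw [hconst, ← Finset.sum_add_distrib, ← hexp]
  refine Finset.sum_congr rfl fun U1 _ => ?_
  rw [add_comm, Finset.sum_filter_add_sum_filter_not]

end Coefficients

def xiCode (x : ℝ) : Fin 3 := if x = -Real.sqrt 3 then 0 else if x = 0 then 1 else 2

lemma xiCode_neg_sqrt_three : xiCode (-Real.sqrt 3) = 0 := by simp [xiCode]

lemma xiCode_zero : xiCode 0 = 1 := by simp [xiCode]

lemma xiCode_sqrt_three : xiCode (Real.sqrt 3) = 2 := by
  have h3 : Real.sqrt 3 ≠ 0 := by positivity
  simp [xiCode, h3, (neg_ne_self.2 h3).symm]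

lemma val3_xiCode_of_mem {x : ℝ} (hx : x ∈ ({-Real.sqrt 3, 0, Real.sqrt 3} : Set ℝ)) :
    val3 (xiCode x) = x := by
  rcases hx with rfl | rfl | rfl
  · rw [xiCode_neg_sqrt_three]; rfl
  · rw [xiCode_zero]; rfl
  · rw [xiCode_sqrt_three]; rfl

def coinCode (x : ℝ) : Bool := decide (x = 1)

lemma pm_coinCode_of_mem {x : ℝ} (hx : x ∈ ({-1, 1} : Set ℝ)) : pm (coinCode x) = x := by
  rcases hx with rfl | rfl <;> norm_num [coinCode, pm]

lemma measurable_xiCode : Measurable xiCode :=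
  Measurable.ite (measurableSet_singleton _) measurable_const
    (Measurable.ite (measurableSet_singleton _) measurable_const measurable_const)

lemma measurable_coinCode : Measurable coinCode :=
  measurable_to_countable' fun b => by
    cases b <;> simp only [coinCode, Set.preimage, Set.mem_singleton_iff, decide_eq_false_iff_not,
      decide_eq_true_eq, Set.ofPred_eq_eq_singleton]
    exacts [(measurableSet_singleton 1).compl, measurableSet_singleton 1]

lemma pm_eq_zmat (b : Upper m → Bool) (p : Upper m) : pm (b p) = zmat b p.1.1 p.1.2 := by
  simp [zmat, p.2]

lemma zmat_eq_of_antisymm {b : Upper m → Bool} {M : Fin m → Fin m → ℝ}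
    (hupper : ∀ p : Upper m, pm (b p) = M p.1.1 p.1.2) (hanti : ∀ i l, i < l → M l i = -M i l)
    (hdiag : ∀ i, M i i = -1) : zmat b = M := by
  funext i l
  rcases lt_trichotomy i l with h | rfl | h
  · simp [zmat, h, hupper ⟨(i, l), h⟩]
  · simp [zmat, hdiag]
  · simp [zmat, h, h.not_gt, hupper ⟨(l, i), h⟩, hanti l i h]

section Pathwise

variable {d : ℕ} {Ω : Type*} (Φ : (Fin d → ℝ) → (Fin m → ℝ) → (Fin m → Fin m → ℝ) → Fin d → ℝ)
  (f : (Fin d → ℝ) → ℝ) (ξ : ℕ → Ω → Fin m → ℝ) (V : ℕ → Ω → Fin m → Fin m → ℝ)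

def noiseCode (j : ℕ) (ω : Ω) : NoiseCode m :=
  (fun i => xiCode (ξ j ω i), fun p => coinCode (V j ω p.1.1 p.1.2))

variable {ξ V}

lemma applyCode_noiseCode {j : ℕ} {ω : Ω} (hω : decode (noiseCode ξ V j ω) = (ξ j ω, V j ω))
    (x : Fin d → ℝ) : applyCode Φ x (noiseCode ξ V j ω) = Φ x (ξ j ω) (V j ω) := by
  rw [applyCode, hω]

lemma chaosBasis_noiseCode {j : ℕ} {ω : Ω} (hω : decode (noiseCode ξ V j ω) = (ξ j ω, V j ω))
    (U1 K2 : Finset (Fin m)) (U2 : Finset (Upper m)) :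
    chaosBasis U1 K2 U2 (noiseCode ξ V j ω)
      = (∏ r ∈ U1 \ K2, ξ j ω r) * (∏ r ∈ K2, H2 (ξ j ω r)) * ∏ p ∈ U2, V j ω p.1.1 p.1.2 := by
  obtain ⟨hξ, hV⟩ := Prod.ext_iff.1 hω
  simp only [decode, funext_iff] at hξ hV
  simp only [chaosBasis, pm_eq_zmat, hV, hξ]

lemma f_XB_eq_qB_add_sum (x0 : Fin d → ℝ) (J : ℕ) {ω : Ω}
    (hω : ∀ j, decode (noiseCode ξ V j ω) = (ξ j ω, V j ω)) :
    f (XB Φ x0 ξ V J ω)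
      = qB Φ f J x0
        + ∑ j ∈ Finset.Icc 1 J, ∑ U1 : Finset (Fin m),
            ∑ U2 ∈ (Finset.univ : Finset (Finset (Upper m))).filter
                (fun U2 => U1.Nonempty ∨ U2.Nonempty),
              ∑ K2 ∈ U1.powerset,
                aB Φ f (J - j) U1 K2 U2 (XB Φ x0 ξ V (j - 1) ω)
                  * (∏ r ∈ U1 \ K2, ξ j ω r) * (∏ r ∈ K2, H2 (ξ j ω r))
                  * ∏ p ∈ U2, V j ω p.1.1 p.1.2 := by
  set F : ℕ → ℝ := fun i => qB Φ f (J - i) (XB Φ x0 ξ V i ω) with hF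
  have hincrement : ∀ i ∈ Finset.range J, F (i + 1) - F i
      = ∑ U1 : Finset (Fin m),
          ∑ U2 ∈ (Finset.univ : Finset (Finset (Upper m))).filter
              (fun U2 => U1.Nonempty ∨ U2.Nonempty),
            ∑ K2 ∈ U1.powerset,
              aB Φ f (J - (1 + i)) U1 K2 U2 (XB Φ x0 ξ V (1 + i - 1) ω)
                * (∏ r ∈ U1 \ K2, ξ (1 + i) ω r) * (∏ r ∈ K2, H2 (ξ (1 + i) ω r))
                * ∏ p ∈ U2, V (1 + i) ω p.1.1 p.1.2 := by
    intro i hi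
    have hJi : J - i = J - (i + 1) + 1 := by rw [Finset.mem_range] at hi; omega
    have hstep := qB_applyCode_eq Φ f (J - (i + 1)) (XB Φ x0 ξ V i ω) (noiseCode ξ V (i + 1) ω)
    rw [applyCode_noiseCode Φ (hω _)] at hstep
    simp only [hF, XB, hJi, hstep, chaosBasis_noiseCode (hω _), add_sub_cancel_left,
      add_comm 1 i, Nat.add_sub_cancel, mul_assoc]
  rw [← Finset.Ico_add_one_right_eq_Icc, Finset.sum_Ico_eq_sum_range, Nat.add_sub_cancel,
    ← Finset.sum_congr rfl hincrement, Finset.sum_range_sub]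
  simp only [hF, Nat.sub_self, Nat.sub_zero, qB, XB]
  ring

end Pathwise

section CodedScheme

variable {d : ℕ} (Φ : (Fin d → ℝ) → (Fin m → ℝ) → (Fin m → Fin m → ℝ) → Fin d → ℝ)
  (f : (Fin d → ℝ) → ℝ)

def codedScheme : (n : ℕ) → (Fin d → ℝ) → (Fin n → NoiseCode m) → Fin d → ℝ
  | 0, x, _ => x
  | n + 1, x, t => codedScheme n (applyCode Φ x (t 0)) (Fin.tail t)

lemma codedScheme_succ' (n : ℕ) (x : Fin d → ℝ) (t : Fin (n + 1) → NoiseCode m) :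
    codedScheme Φ (n + 1) x t
      = applyCode Φ (codedScheme Φ n x (Fin.init t)) (t (Fin.last n)) := by
  induction n generalizing x with
  | zero => rfl
  | succ n ih =>
    rw [codedScheme, ih, ← Fin.tail_init_eq_init_tail]
    rfl

lemma qB_eq_sum_codedScheme (n : ℕ) (x : Fin d → ℝ) :
    qB Φ f n x = ∑ t : Fin n → NoiseCode m, (∏ j, codeWeight (t j)) * f (codedScheme Φ n x t) := by
  induction n generalizing x with
  | zero => simp [qB, codedScheme]
  | succ n ih =>
    rw [qB_succ_eq_sum]
    conv_rhs => rw [← (Fin.consEquiv fun _ => NoiseCode m).sum_comp, Fintype.sum_prod_type]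
    refine Finset.sum_congr rfl fun c _ => ?_
    rw [ih, Finset.mul_sum]
    refine Finset.sum_congr rfl fun t _ => ?_
    simp only [Fin.consEquiv_apply, Fin.prod_univ_succ, Fin.cons_zero, Fin.cons_succ, codedScheme,
      mul_assoc]
    rfl

lemma XB_eq_codedScheme {Ω : Type*} (x0 : Fin d → ℝ) {ξ : ℕ → Ω → Fin m → ℝ}
    {V : ℕ → Ω → Fin m → Fin m → ℝ} {ω : Ω}
    (hω : ∀ j, decode (noiseCode ξ V j ω) = (ξ j ω, V j ω)) (n : ℕ) :
    XB Φ x0 ξ V n ω = codedScheme Φ n x0 fun j : Fin n => noiseCode ξ V (j + 1) ω := by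
  induction n with
  | zero => rfl
  | succ n ih =>
    change Φ (XB Φ x0 ξ V n ω) (ξ (n + 1) ω) (V (n + 1) ω) = _
    rw [ih, ← applyCode_noiseCode Φ (hω (n + 1)), codedScheme_succ']
    rfl

end CodedScheme

lemma toReal_xiLaw_preimage_xiCode (v : Fin 3) :
    (xiLaw (xiCode ⁻¹' {v})).toReal = xiWeight v := by
  fin_cases v <;>
    simp [xiLaw, xiCode_sqrt_three,
      xiCode_neg_sqrt_three, xiCode_zero, xiWeight, ENNReal.toReal_div]

lemma toReal_coinLaw_preimage_coinCode (b : Bool) :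
    (coinLaw (coinCode ⁻¹' {b})).toReal = 1 / 2 := by
  have hmeas : MeasurableSet (coinCode ⁻¹' {b}) := measurable_coinCode (measurableSet_singleton b)
  cases b <;> norm_num [coinLaw, Measure.dirac_apply' _ hmeas, Set.indicator_apply, coinCode,
    ENNReal.toReal_div]

lemma xiLaw_ne_zero : xiLaw ≠ 0 := fun h => by
  simpa [xiLaw] using congrArg (fun μ : Measure ℝ => μ {0}) h

lemma coinLaw_ne_zero : coinLaw ≠ 0 := fun h => by
  simpa [coinLaw] using congrArg (fun μ : Measure ℝ => μ {1}) h

lemma ae_xiLaw_val3_xiCode : ∀ᵐ x ∂xiLaw, val3 (xiCode x) = x := by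
  simp only [xiLaw, ae_add_measure_iff]
  refine ⟨⟨Measure.ae_smul_measure ?_ _, Measure.ae_smul_measure ?_ _⟩,
    Measure.ae_smul_measure ?_ _⟩ <;>
    rw [ae_dirac_eq] <;> exact val3_xiCode_of_mem (by simp)

lemma ae_coinLaw_pm_coinCode : ∀ᵐ x ∂coinLaw, pm (coinCode x) = x := by
  simp only [coinLaw, ae_add_measure_iff]
  refine ⟨Measure.ae_smul_measure ?_ _, Measure.ae_smul_measure ?_ _⟩ <;>
    rw [ae_dirac_eq] <;> exact pm_coinCode_of_mem (by simp)

section Law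

variable {Ω : Type*} [MeasurableSpace Ω] {P : Measure Ω} {ξ : ℕ → Ω → Fin m → ℝ}
  {V : ℕ → Ω → Fin m → Fin m → ℝ}

lemma aemeasurable_xi_apply (hξdist : ∀ j i, Measure.map (fun ω => ξ j ω i) P = xiLaw)
    (j : ℕ) (i : Fin m) : AEMeasurable (fun ω => ξ j ω i) P :=
  .of_map_ne_zero (hξdist j i ▸ xiLaw_ne_zero)

lemma aemeasurable_V_apply
    (hVdist : ∀ j (u : Upper m), Measure.map (fun ω => V j ω u.1.1 u.1.2) P = coinLaw)
    (j : ℕ) (u : Upper m) : AEMeasurable (fun ω => V j ω u.1.1 u.1.2) P :=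
  .of_map_ne_zero (hVdist j u ▸ coinLaw_ne_zero)

lemma ae_decode_noiseCode (hξdist : ∀ j i, Measure.map (fun ω => ξ j ω i) P = xiLaw)
    (hVdist : ∀ j (u : Upper m), Measure.map (fun ω => V j ω u.1.1 u.1.2) P = coinLaw)
    (hVanti : ∀ j ω i l, i < l → V j ω l i = -V j ω i l) (hVdiag : ∀ j ω i, V j ω i i = -1) :
    ∀ᵐ ω ∂P, ∀ j, decode (noiseCode ξ V j ω) = (ξ j ω, V j ω) := by
  have hξ (j : ℕ) (i : Fin m) : ∀ᵐ ω ∂P, val3 (xiCode (ξ j ω i)) = ξ j ω i :=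
    ae_of_ae_map (aemeasurable_xi_apply hξdist j i) (hξdist j i ▸ ae_xiLaw_val3_xiCode)
  have hV (j : ℕ) (u : Upper m) : ∀ᵐ ω ∂P, pm (coinCode (V j ω u.1.1 u.1.2)) = V j ω u.1.1 u.1.2 :=
    ae_of_ae_map (aemeasurable_V_apply hVdist j u) (hVdist j u ▸ ae_coinLaw_pm_coinCode)
  filter_upwards [ae_all_iff.2 fun j => ae_all_iff.2 (hξ j),
    ae_all_iff.2 fun j => ae_all_iff.2 (hV j)] with ω hξω hVω j
  exact Prod.ext (funext (hξω j)) (zmat_eq_of_antisymm (hVω j) (hVanti j ω) (hVdiag j ω))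

lemma toReal_measure_noiseCode_eq (hindep : iIndepFun (noiseB ξ V) P)
    (hξdist : ∀ j i, Measure.map (fun ω => ξ j ω i) P = xiLaw)
    (hVdist : ∀ j (u : Upper m), Measure.map (fun ω => V j ω u.1.1 u.1.2) P = coinLaw)
    {J : ℕ} (t : Fin J → NoiseCode m) :
    (P {ω | (fun j : Fin J => noiseCode ξ V (j + 1) ω) = t}).toReal = ∏ j, codeWeight (t j) := by
  let g : Fin J × (Fin m ⊕ Upper m) → ℕ × (Fin m ⊕ Upper m) := fun q => (q.1 + 1, q.2)
  have hg : g.Injective := fun a b h => by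
    simpa [g, Prod.ext_iff, Fin.ext_iff] using h
  let sets : Fin J × (Fin m ⊕ Upper m) → Set ℝ := fun q =>
    Sum.elim (fun i => xiCode ⁻¹' {(t q.1).1 i}) (fun u => coinCode ⁻¹' {(t q.1).2 u}) q.2
  have hsets (q) (_ : q ∈ univ) : MeasurableSet (sets q) := by
    rcases q with ⟨j, i | u⟩
    exacts [measurable_xiCode (measurableSet_singleton _),
      measurable_coinCode (measurableSet_singleton _)]
  have hpre : {ω | (fun j : Fin J => noiseCode ξ V (j + 1) ω) = t}
      = ⋂ q ∈ univ, noiseB ξ V (g q) ⁻¹' sets q := by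
    ext ω
    simp [g, sets, noiseB, noiseCode, funext_iff, Prod.ext_iff, forall_and]
  rw [hpre, (hindep.precomp hg).measure_inter_preimage_eq_mul univ hsets, Fintype.prod_prod_type,
    ENNReal.toReal_prod]
  refine Finset.prod_congr rfl fun j _ => ?_
  rw [Fintype.prod_sum_type, ENNReal.toReal_mul, ENNReal.toReal_prod, ENNReal.toReal_prod,
    codeWeight]
  congr 1 <;> refine Finset.prod_congr rfl fun k _ => ?_
  · rw [← toReal_xiLaw_preimage_xiCode, ← hξdist (j + 1) k,
      Measure.map_apply_of_aemeasurable (aemeasurable_xi_apply hξdist _ k)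
        (measurable_xiCode (measurableSet_singleton _))]
    rfl
  · rw [← toReal_coinLaw_preimage_coinCode ((t j).2 k), ← hVdist (j + 1) k,
      Measure.map_apply_of_aemeasurable (aemeasurable_V_apply hVdist _ k)
        (measurable_coinCode (measurableSet_singleton _))]
    rfl

lemma integral_f_XB_eq_qB [IsFiniteMeasure P] (hindep : iIndepFun (noiseB ξ V) P)
    (hξdist : ∀ j i, Measure.map (fun ω => ξ j ω i) P = xiLaw)
    (hVdist : ∀ j (u : Upper m), Measure.map (fun ω => V j ω u.1.1 u.1.2) P = coinLaw)
    (hVanti : ∀ j ω i l, i < l → V j ω l i = -V j ω i l) (hVdiag : ∀ j ω i, V j ω i i = -1)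
    {d : ℕ} (Φ : (Fin d → ℝ) → (Fin m → ℝ) → (Fin m → Fin m → ℝ) → Fin d → ℝ)
    (f : (Fin d → ℝ) → ℝ) (x0 : Fin d → ℝ) (J : ℕ) :
    ∫ ω, f (XB Φ x0 ξ V J ω) ∂P = qB Φ f J x0 := by
  set W : Ω → (Fin J → NoiseCode m) := fun ω j => noiseCode ξ V (j + 1) ω
  have hW : AEMeasurable W P := aemeasurable_pi_lambda _ fun j =>
    .prodMk (aemeasurable_pi_lambda _ fun i =>
        measurable_xiCode.comp_aemeasurable (aemeasurable_xi_apply hξdist _ i))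
      (aemeasurable_pi_lambda _ fun u =>
        measurable_coinCode.comp_aemeasurable (aemeasurable_V_apply hVdist _ u))
  calc ∫ ω, f (XB Φ x0 ξ V J ω) ∂P = ∫ ω, f (codedScheme Φ J x0 (W ω)) ∂P :=
        integral_congr_ae <| (ae_decode_noiseCode hξdist hVdist hVanti hVdiag).mono
          fun ω hω => congrArg f (XB_eq_codedScheme Φ x0 hω J)
    _ = ∫ t, f (codedScheme Φ J x0 t) ∂P.map W :=
        (integral_map hW
          (measurable_of_countable fun t => f (codedScheme Φ J x0 t)).aestronglyMeasurable).symm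
    _ = ∑ t, (∏ j, codeWeight (t j)) * f (codedScheme Φ J x0 t) := by
        rw [integral_fintype .of_finite]
        refine Finset.sum_congr rfl fun t _ => ?_
        rw [measureReal_def, Measure.map_apply_of_aemeasurable hW (measurableSet_singleton t),
          smul_eq_mul, ← toReal_measure_noiseCode_eq hindep hξdist hVdist t]
        rfl
    _ = qB Φ f J x0 := (qB_eq_sum_codedScheme Φ f J x0).symm

end Law

end

theorem stmt3_general
    {d m : ℕ} (x0 : Fin d → ℝ) (J : ℕ)
    {Ω : Type*} [MeasurableSpace Ω] (P : Measure Ω) [IsProbabilityMeasure P]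
    (ξ : ℕ → Ω → Fin m → ℝ) (V : ℕ → Ω → Fin m → Fin m → ℝ)
    (hindep : iIndepFun (noiseB ξ V) P)
    (hξdist : ∀ j i, Measure.map (fun ω => ξ j ω i) P = xiLaw)
    (hVdist : ∀ j (u : Upper m),
      Measure.map (fun ω => V j ω u.1.1 u.1.2) P = coinLaw)
    (hVanti : ∀ j ω i l, i < l → V j ω l i = -V j ω i l)
    (hVdiag : ∀ j ω i, V j ω i i = -1)
    (Φ : (Fin d → ℝ) → (Fin m → ℝ) → (Fin m → Fin m → ℝ) → Fin d → ℝ)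
    (f : (Fin d → ℝ) → ℝ) :
    (∀ᵐ ω ∂P, f (XB Φ x0 ξ V J ω)
        = (∫ ω', f (XB Φ x0 ξ V J ω') ∂P)
          + ∑ j ∈ Finset.Icc 1 J, ∑ U1 : Finset (Fin m),
              ∑ U2 ∈ (Finset.univ : Finset (Finset (Upper m))).filter
                  (fun U2 => U1.Nonempty ∨ U2.Nonempty),
                ∑ K2 ∈ U1.powerset,
                  aB Φ f (J - j) U1 K2 U2 (XB Φ x0 ξ V (j - 1) ω)
                    * (∏ r ∈ U1 \ K2, ξ j ω r) * (∏ r ∈ K2, H2 (ξ j ω r))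
                    * ∏ p ∈ U2, V j ω p.1.1 p.1.2)
      ∧ (∫ ω', f (XB Φ x0 ξ V J ω') ∂P) = qB Φ f J x0 := by
  have hmean := integral_f_XB_eq_qB hindep hξdist hVdist hVanti hVdiag Φ f x0 J
  refine ⟨?_, hmean⟩
  filter_upwards [ae_decode_noiseCode hξdist hVdist hVanti hVdiag] with ω hω
  rw [hmean]
  exact f_XB_eq_qB_add_sum Φ f x0 J hω

/-- Almost surely,
`f(X_{Δ,T}) = E[f(X_{Δ,T})] + Σ_{j=1}^J Σ_{(U_1,U_2)∈𝒜} Σ_{o∈{1,2}^{U_1}}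
a_{j,o,U_1,U_2}(X_{Δ,(j-1)Δ}) Π_{r∈U_1} H_{o_r}(ξ_j^r) Π_{(k,l)∈U_2} V_j^{kl}`,
and `E[f(X_{Δ,T})] = q_0(x_0)`; `o` is encoded by `K_2 ⊆ U_1`. -/
theorem stmt3
    {d m : ℕ} (T : ℝ) (hT : 0 < T) (x0 : Fin d → ℝ) (J : ℕ) (hJ : 1 ≤ J)
    {Ω : Type*} [MeasurableSpace Ω] (P : Measure Ω) [IsProbabilityMeasure P]
    (ξ : ℕ → Ω → Fin m → ℝ) (V : ℕ → Ω → Fin m → Fin m → ℝ)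
    (hξmeas : ∀ j, Measurable (ξ j)) (hVmeas : ∀ j, Measurable (V j))
    (hindep : iIndepFun (noiseB ξ V) P)
    (hξdist : ∀ j i, Measure.map (fun ω => ξ j ω i) P = xiLaw)
    (hVdist : ∀ j (u : Upper m),
      Measure.map (fun ω => V j ω u.1.1 u.1.2) P = coinLaw)
    (hVanti : ∀ j ω i l, i < l → V j ω l i = -V j ω i l)
    (hVdiag : ∀ j ω i, V j ω i i = -1)
    (Φ : (Fin d → ℝ) → (Fin m → ℝ) → (Fin m → Fin m → ℝ) → Fin d → ℝ)
    (hΦ : Measurable fun p : (Fin d → ℝ) × (Fin m → ℝ) × (Fin m → Fin m → ℝ) =>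
      Φ p.1 p.2.1 p.2.2)
    (f : (Fin d → ℝ) → ℝ) (hf : Measurable f) :
    (∀ᵐ ω ∂P, f (XB Φ x0 ξ V J ω)
        = (∫ ω', f (XB Φ x0 ξ V J ω') ∂P)
          + ∑ j ∈ Finset.Icc 1 J, ∑ U1 : Finset (Fin m),
              ∑ U2 ∈ (Finset.univ : Finset (Finset (Upper m))).filter
                  (fun U2 => U1.Nonempty ∨ U2.Nonempty),
                ∑ K2 ∈ U1.powerset,
                  aB Φ f (J - j) U1 K2 U2 (XB Φ x0 ξ V (j - 1) ω)
                    * (∏ r ∈ U1 \ K2, ξ j ω r) * (∏ r ∈ K2, H2 (ξ j ω r))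
                    * ∏ p ∈ U2, V j ω p.1.1 p.1.2)
      ∧ (∫ ω', f (XB Φ x0 ξ V J ω') ∂P) = qB Φ f J x0 :=
  stmt3_general x0 J P ξ V hindep hξdist hVdist hVanti hVdiag Φ f

end
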